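/- arXiv:1607.00355 — 2 statements merged into one kernel-verified Lean document; each statement's English description precedes it below -/
import Mathlib

section
/- For all q ∈ [0,1], H(q) ≥ 4q(1-q), i.e., the binary entropy is at least the square of the Bhattacharyya function B(q) = 2√(q(1-q)). -/
open Real

noncomputable def binEnt (q : ℝ) : ℝ := -(q * Real.logb 2 q) - (1 - q) * Real.logb 2 (1 - q)

noncomputable def Bh (q : ℝ) : ℝ := 2 * Real.sqrt (q * (1 - q))

noncomputable def phi (u : ℝ) : ℝ := binEnt ((1 - Real.sqrt (1 - u ^ 2)) / 2)

open Set

/-!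
In natural units the claim is `g q ≥ 0` for `g q = h q - 4 log 2 · q (1 - q)`, `h` the binary
entropy in nats. Since `g'' q = 8 log 2 - 1 / (q (1 - q))`, `g` is convex on the middle interval
`[c, 1 - c]` where `q (1 - q) ≥ 1 / (8 log 2)` and concave on `[0, c]` and `[1 - c, 1]`.
Being symmetric about `1/2`, `g` attains its minimum over the middle interval at `1/2`, where it
vanishes; on `[0, c]` concavity gives `g ≥ min (g 0) (g c) ≥ 0`, and `[1 - c, 1]` is its
mirror image.
-/

lemma ConvexOn.apply_half_le_of_symmetric {s : Set ℝ} {f : ℝ → ℝ} (hf : ConvexOn ℝ s f)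
    (hsymm : ∀ x, f (1 - x) = f x) {x : ℝ} (hx : x ∈ s) (hx' : 1 - x ∈ s) : f (1 / 2) ≤ f x := by
  have := hf.2 hx hx' (by norm_num : (0 : ℝ) ≤ 1 / 2) (by norm_num : (0 : ℝ) ≤ 1 / 2)
    (by norm_num)
  have hmid : (1 / 2 : ℝ) • x + (1 / 2 : ℝ) • (1 - x) = 1 / 2 := by
    simp only [smul_eq_mul]
    ring
  rwa [hmid, hsymm, ← add_smul, add_halves, one_smul] at this

lemma exists_mul_one_sub_eq {a : ℝ} (ha₀ : 0 ≤ a) (ha : a ≤ 1 / 4) :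
    ∃ c, 0 ≤ c ∧ c ≤ 1 / 2 ∧ c * (1 - c) = a := by
  have hs := sq_sqrt (by linarith : 0 ≤ 1 - 4 * a)
  have hs₁ : √(1 - 4 * a) ≤ 1 := sqrt_le_one.2 (by linarith)
  refine ⟨(1 - √(1 - 4 * a)) / 2, by linarith, by linarith [sqrt_nonneg (1 - 4 * a)], ?_⟩
  linear_combination (-1 / 4) * hs

noncomputable def binEntropyGap (κ q : ℝ) : ℝ := binEntropy q - κ * (q * (1 - q))

lemma binEntropyGap_one_sub (κ q : ℝ) : binEntropyGap κ (1 - q) = binEntropyGap κ q := by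
  simp only [binEntropyGap, binEntropy_one_sub]
  ring

lemma continuous_binEntropyGap (κ : ℝ) : Continuous (binEntropyGap κ) :=
  binEntropy_continuous.sub (by fun_prop)

lemma hasDerivAt_binEntropyGap (κ : ℝ) {q : ℝ} (h0 : q ≠ 0) (h1 : q ≠ 1) :
    HasDerivAt (binEntropyGap κ) (log (1 - q) - log q - κ * (1 - 2 * q)) q := by
  have h := (hasDerivAt_binEntropy h0 h1).sub
    (((hasDerivAt_id q).mul ((hasDerivAt_const q 1).sub (hasDerivAt_id q))).const_mul κ)
  refine h.congr_deriv ?_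
  simp only [Pi.sub_apply, id]
  ring

lemma hasDerivAt_deriv_binEntropyGap (κ : ℝ) {q : ℝ} (h0 : q ≠ 0) (h1 : q ≠ 1) :
    HasDerivAt (fun x ↦ log (1 - x) - log x - κ * (1 - 2 * x)) (2 * κ - (q * (1 - q))⁻¹) q := by
  have h1' : 1 - q ≠ 0 := sub_ne_zero.2 h1.symm
  have h := (((hasDerivAt_const q 1).sub (hasDerivAt_id q)).log h1').sub (hasDerivAt_log h0)
    |>.sub (((hasDerivAt_const q 1).sub ((hasDerivAt_id q).const_mul 2)).const_mul κ)
  refine h.congr_deriv ?_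
  simp only [Pi.sub_apply, id]
  field_simp
  ring

lemma convexOn_binEntropyGap {κ c : ℝ} (hc₀ : 0 ≤ c) (hc : 1 ≤ 2 * κ * (c * (1 - c))) :
    ConvexOn ℝ (Icc c (1 - c)) (binEntropyGap κ) := by
  refine convexOn_of_hasDerivWithinAt2_nonneg
    (f' := fun x ↦ log (1 - x) - log x - κ * (1 - 2 * x))
    (f'' := fun x ↦ 2 * κ - (x * (1 - x))⁻¹) (convex_Icc _ _)
    (continuous_binEntropyGap κ).continuousOn (fun x hx ↦ ?_) (fun x hx ↦ ?_) (fun x hx ↦ ?_)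
  all_goals
    rw [interior_Icc] at hx
    obtain ⟨hcx, hxc⟩ := hx
  · exact (hasDerivAt_binEntropyGap κ (by linarith) (by linarith)).hasDerivWithinAt
  · exact (hasDerivAt_deriv_binEntropyGap κ (by linarith) (by linarith)).hasDerivWithinAt
  · have hx : 0 < x * (1 - x) := by nlinarith
    have hκ : 0 < κ := by nlinarith [mul_nonneg hc₀ (by linarith : 0 ≤ 1 - c)]
    have : c * (1 - c) ≤ x * (1 - x) := by nlinarith
    have : 1 ≤ 2 * κ * (x * (1 - x)) := by nlinarith
    rw [sub_nonneg, inv_le_iff_one_le_mul₀' hx]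
    linarith

lemma concaveOn_binEntropyGap {κ c : ℝ} (hc : c ≤ 1 / 2) (hκc : 2 * κ * (c * (1 - c)) ≤ 1) :
    ConcaveOn ℝ (Icc 0 c) (binEntropyGap κ) := by
  refine concaveOn_of_hasDerivWithinAt2_nonpos
    (f' := fun x ↦ log (1 - x) - log x - κ * (1 - 2 * x))
    (f'' := fun x ↦ 2 * κ - (x * (1 - x))⁻¹) (convex_Icc _ _)
    (continuous_binEntropyGap κ).continuousOn (fun x hx ↦ ?_) (fun x hx ↦ ?_) (fun x hx ↦ ?_)
  all_goals
    rw [interior_Icc] at hx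
    obtain ⟨hx₀, hxc⟩ := hx
  · exact (hasDerivAt_binEntropyGap κ (by linarith) (by linarith)).hasDerivWithinAt
  · exact (hasDerivAt_deriv_binEntropyGap κ (by linarith) (by linarith)).hasDerivWithinAt
  · have hx : 0 < x * (1 - x) := by nlinarith
    have : x * (1 - x) ≤ c * (1 - c) := by nlinarith
    have : 2 * κ * (x * (1 - x)) ≤ 1 := by
      rcases le_or_gt κ 0 with hκ | hκ <;> nlinarith
    rw [sub_nonpos, ← one_div, le_div_iff₀ hx]
    linarith

lemma binEnt_eq_binEntropy_div_log_two (q : ℝ) : binEnt q = binEntropy q / log 2 := by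
  simp only [binEnt, binEntropy, logb, log_inv]
  ring

lemma four_mul_log_two_mul_le_binEntropy {q : ℝ} (hq : q ∈ Icc 0 1) :
    4 * log 2 * (q * (1 - q)) ≤ binEntropy q := by
  have hlog : 1 / 2 < log 2 := by linarith [log_two_gt_d9]
  obtain ⟨c, hc₀, hc, hcc⟩ := exists_mul_one_sub_eq (a := (8 * log 2)⁻¹) (by positivity)
    (by rw [inv_le_comm₀ (by positivity) (by norm_num)]; linarith)
  have hκc : 2 * (4 * log 2) * (c * (1 - c)) = 1 := by
    rw [hcc]
    field_simp
    norm_num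
  have hmid : ∀ x ∈ Icc c (1 - c), 0 ≤ binEntropyGap (4 * log 2) x := fun x hx ↦
    calc 0 = binEntropyGap (4 * log 2) (1 / 2) := by
          rw [binEntropyGap, one_div, binEntropy_two_inv]
          ring
      _ ≤ binEntropyGap (4 * log 2) x :=
        (convexOn_binEntropyGap hc₀ hκc.ge).apply_half_le_of_symmetric (binEntropyGap_one_sub _)
          hx ⟨by linarith [hx.2], by linarith [hx.1]⟩
  have hleft : ∀ x ∈ Icc 0 c, 0 ≤ binEntropyGap (4 * log 2) x := fun x hx ↦
    calc 0 ≤ min (binEntropyGap (4 * log 2) 0) (binEntropyGap (4 * log 2) c) :=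
          le_min (by simp [binEntropyGap]) (hmid c ⟨le_rfl, by linarith⟩)
      _ ≤ binEntropyGap (4 * log 2) x :=
        (concaveOn_binEntropyGap hc hκc.le).min_le_of_mem_Icc ⟨le_rfl, hc₀⟩ ⟨hc₀, le_rfl⟩ hx
  suffices 0 ≤ binEntropyGap (4 * log 2) q by
    rw [binEntropyGap] at this
    linarith
  rcases le_or_gt q c with hqc | hcq
  · exact hleft q ⟨hq.1, hqc⟩
  rcases le_or_gt q (1 - c) with hqc' | hcq'
  · exact hmid q ⟨hcq.le, hqc'⟩
  · rw [← binEntropyGap_one_sub]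
    exact hleft (1 - q) ⟨by linarith [hq.2], by linarith⟩

theorem binEnt_ge_Bh_sq (q : ℝ) (hq : q ∈ Set.Icc (0:ℝ) 1) :
    4 * q * (1 - q) ≤ binEnt q := by
  rw [binEnt_eq_binEntropy_div_log_two, le_div_iff₀ (log_pos one_lt_two)]
  linarith [four_mul_log_two_mul_le_binEntropy hq]
end

section
/- For a binary-input discrete memoryless channel W with finite output alphabet satisfying W(y|0)+W(y|1) > 0 for every y, the symmetric capacity and Bhattacharyya parameter satisfy Z(W) ≥ 1 - I(W). -/
open Real

variable {Y : Type*} [Fintype Y]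

noncomputable def symCap (W : Fin 2 → Y → ℝ) : ℝ :=
  ∑ y, ∑ x : Fin 2,
    (1/2) * W x y * Real.logb 2 (W x y / ((1/2) * W 0 y + (1/2) * W 1 y))

noncomputable def bhat (W : Fin 2 → Y → ℝ) : ℝ := ∑ y, Real.sqrt (W 0 y * W 1 y)

/-!
Put `q(y) = (W(y|0) + W(y|1))/2` and `p_y = W(y|0)/(W(y|0) + W(y|1))`. Then
`1 - I(W) = ∑ q(y) h(p_y)` and `Z(W) = ∑ q(y) · 2√(p_y(1 - p_y))`, so it suffices to show
`h(p) ≤ 2√(p(1 - p))` on `[0, 1]`. In nats, the gap `G = log 2 · B - H` with `B = 2√(p(1 - p))`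
is symmetric about `1/2`, vanishes at `0` and `1/2`, and has `G'' = 4(B - log 2)/B³`. Hence `G` is
convex on the middle interval where `B ≥ log 2`, where convexity and symmetry give
`G(p) ≥ G(1/2) = 0`, and concave on the outer intervals, where `G` lies above the chord joining
`G(0) = 0` to a nonnegative value.
-/

lemma Bh_sq {p : ℝ} (hp₀ : 0 ≤ p) (hp₁ : p ≤ 1) : Bh p ^ 2 = 4 * (p * (1 - p)) := by
  rw [Bh, mul_pow, Real.sq_sqrt (by nlinarith)]
  norm_num

lemma Bh_pos {p : ℝ} (hp₀ : 0 < p) (hp₁ : p < 1) : 0 < Bh p := by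
  unfold Bh
  have : 0 < p * (1 - p) := by nlinarith
  positivity

lemma Bh_le_Bh_of_mul_one_sub_le {p q : ℝ} (h : p * (1 - p) ≤ q * (1 - q)) : Bh p ≤ Bh q := by
  unfold Bh
  gcongr

lemma Bh_one_sub (p : ℝ) : Bh (1 - p) = Bh p := by
  rw [Bh, Bh, sub_sub_cancel, mul_comm (1 - p)]

lemma hasDerivAt_Bh {p : ℝ} (hp₀ : 0 < p) (hp₁ : p < 1) :
    HasDerivAt Bh (2 * (1 - 2 * p) / Bh p) p := by
  have hpq : p * (1 - p) ≠ 0 := by nlinarith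
  have h := (((hasDerivAt_id p).mul ((hasDerivAt_id p).const_sub 1)).sqrt hpq).const_mul 2
  exact h.congr_deriv (by simp only [Bh, id, Pi.mul_apply]; field_simp; ring)

lemma hasDerivAt_deriv_Bh {p : ℝ} (hp₀ : 0 < p) (hp₁ : p < 1) :
    HasDerivAt (fun p ↦ 2 * (1 - 2 * p) / Bh p) (-4 / Bh p ^ 3) p := by
  have hB := Bh_pos hp₀ hp₁
  have hB2 := Bh_sq hp₀.le hp₁.le
  have h := ((((hasDerivAt_id p).const_mul 2).const_sub 1).const_mul 2).div
    (hasDerivAt_Bh hp₀ hp₁) hB.ne'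
  exact h.congr_deriv (by simp only [id]; field_simp; linear_combination (-4) * hB2)

lemma hasDerivAt_log_one_sub_sub_log {p : ℝ} (hp₀ : 0 < p) (hp₁ : p < 1) :
    HasDerivAt (fun p ↦ log (1 - p) - log p) (-1 / (p * (1 - p))) p := by
  have hp₁' : 1 - p ≠ 0 := by linarith
  have h := (((hasDerivAt_id p).const_sub 1).log hp₁').sub (hasDerivAt_log hp₀.ne')
  exact h.congr_deriv (by simp only [id]; field_simp; ring)

noncomputable def entropyGap (p : ℝ) : ℝ := log 2 * Bh p - binEntropy p

lemma entropyGap_zero : entropyGap 0 = 0 := by simp [entropyGap, Bh]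

lemma entropyGap_two_inv : entropyGap 2⁻¹ = 0 := by
  have : Bh 2⁻¹ = 1 := by
    rw [Bh, show (2⁻¹ : ℝ) * (1 - 2⁻¹) = 2⁻¹ ^ 2 by norm_num, Real.sqrt_sq (by norm_num)]
    norm_num
  simp [entropyGap, this]

lemma entropyGap_one_sub (p : ℝ) : entropyGap (1 - p) = entropyGap p := by
  rw [entropyGap, entropyGap, Bh_one_sub, binEntropy_one_sub]

lemma continuous_entropyGap : Continuous entropyGap := by
  unfold entropyGap Bh
  fun_prop

lemma hasDerivAt_entropyGap {p : ℝ} (hp₀ : 0 < p) (hp₁ : p < 1) :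
    HasDerivAt entropyGap (log 2 * (2 * (1 - 2 * p) / Bh p) - (log (1 - p) - log p)) p :=
  ((hasDerivAt_Bh hp₀ hp₁).const_mul _).sub (hasDerivAt_binEntropy hp₀.ne' hp₁.ne)

lemma hasDerivAt_deriv_entropyGap {p : ℝ} (hp₀ : 0 < p) (hp₁ : p < 1) :
    HasDerivAt (fun p ↦ log 2 * (2 * (1 - 2 * p) / Bh p) - (log (1 - p) - log p))
      (4 * (Bh p - log 2) / Bh p ^ 3) p := by
  have hB := Bh_pos hp₀ hp₁
  have hB2 := Bh_sq hp₀.le hp₁.le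
  have h := ((hasDerivAt_deriv_Bh hp₀ hp₁).const_mul (log 2)).sub
    (hasDerivAt_log_one_sub_sub_log hp₀ hp₁)
  refine h.congr_deriv ?_
  rw [show p * (1 - p) = Bh p ^ 2 / 4 by linarith]
  field_simp
  ring

noncomputable def entropyGapInflection : ℝ := (1 - √(1 - log 2 ^ 2)) / 2

lemma log_two_sq_lt_one : log 2 ^ 2 < 1 := by
  have := Real.log_two_lt_d9
  have := Real.log_pos one_lt_two
  nlinarith

lemma entropyGapInflection_pos : 0 < entropyGapInflection := by
  have : √(1 - log 2 ^ 2) < 1 := by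
    rw [Real.sqrt_lt' one_pos]
    nlinarith [Real.log_pos one_lt_two]
  unfold entropyGapInflection
  linarith

lemma entropyGapInflection_lt_two_inv : entropyGapInflection < 2⁻¹ := by
  have : 0 < √(1 - log 2 ^ 2) := Real.sqrt_pos.2 (by linarith [log_two_sq_lt_one])
  unfold entropyGapInflection
  linarith

lemma Bh_entropyGapInflection : Bh entropyGapInflection = log 2 := by
  have hsq := Real.sq_sqrt (by linarith [log_two_sq_lt_one] : 0 ≤ 1 - log 2 ^ 2)
  have : entropyGapInflection * (1 - entropyGapInflection) = (log 2 / 2) ^ 2 := by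
    unfold entropyGapInflection
    linear_combination (-1 / 4 : ℝ) * hsq
  rw [Bh, this, Real.sqrt_sq (by positivity)]
  ring

lemma convexOn_entropyGap :
    ConvexOn ℝ (Set.Icc entropyGapInflection (1 - entropyGapInflection)) entropyGap := by
  have hq₀ := entropyGapInflection_pos
  refine convexOn_of_hasDerivWithinAt2_nonneg (convex_Icc _ _)
    (f' := fun p ↦ log 2 * (2 * (1 - 2 * p) / Bh p) - (log (1 - p) - log p))
    (f'' := fun p ↦ 4 * (Bh p - log 2) / Bh p ^ 3)
    continuous_entropyGap.continuousOn ?_ ?_ ?_ <;> rw [interior_Icc] <;>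
    rintro p ⟨hp₀, hp₁⟩
  · exact (hasDerivAt_entropyGap (by linarith) (by linarith)).hasDerivWithinAt
  · exact (hasDerivAt_deriv_entropyGap (by linarith) (by linarith)).hasDerivWithinAt
  · have hB := Bh_pos (p := p) (by linarith) (by linarith)
    have : log 2 ≤ Bh p := Bh_entropyGapInflection ▸ Bh_le_Bh_of_mul_one_sub_le (by nlinarith)
    have : 0 ≤ Bh p - log 2 := by linarith
    positivity

lemma concaveOn_entropyGap : ConcaveOn ℝ (Set.Icc 0 entropyGapInflection) entropyGap := by
  have hq := entropyGapInflection_lt_two_inv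
  refine concaveOn_of_hasDerivWithinAt2_nonpos (convex_Icc _ _)
    (f' := fun p ↦ log 2 * (2 * (1 - 2 * p) / Bh p) - (log (1 - p) - log p))
    (f'' := fun p ↦ 4 * (Bh p - log 2) / Bh p ^ 3)
    continuous_entropyGap.continuousOn ?_ ?_ ?_ <;> rw [interior_Icc] <;>
    rintro p ⟨hp₀, hp₁⟩
  · exact (hasDerivAt_entropyGap hp₀ (by linarith)).hasDerivWithinAt
  · exact (hasDerivAt_deriv_entropyGap hp₀ (by linarith)).hasDerivWithinAt
  · have hB := Bh_pos hp₀ (by linarith)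
    have : Bh p ≤ log 2 := Bh_entropyGapInflection ▸ Bh_le_Bh_of_mul_one_sub_le (by nlinarith)
    exact div_nonpos_of_nonpos_of_nonneg (by linarith) (by positivity)

lemma entropyGap_nonneg {p : ℝ} (hp₀ : 0 ≤ p) (hp₁ : p ≤ 1) : 0 ≤ entropyGap p := by
  set q := entropyGapInflection
  have hq₀ : 0 < q := entropyGapInflection_pos
  have hq : q < 2⁻¹ := entropyGapInflection_lt_two_inv
  have middle : ∀ p ∈ Set.Icc q (1 - q), 0 ≤ entropyGap p := by
    intro p hp
    have hp' : 1 - p ∈ Set.Icc q (1 - q) := ⟨by linarith [hp.2], by linarith [hp.1]⟩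
    have h := convexOn_entropyGap.2 hp hp' (by norm_num : (0 : ℝ) ≤ 2⁻¹)
      (by norm_num : (0 : ℝ) ≤ 2⁻¹) (by norm_num)
    rw [smul_eq_mul, smul_eq_mul, ← mul_add, add_sub_cancel, mul_one, entropyGap_two_inv,
      smul_eq_mul, smul_eq_mul, entropyGap_one_sub] at h
    linarith
  have left : ∀ p ∈ Set.Icc 0 q, 0 ≤ entropyGap p := by
    intro p hp
    have h := concaveOn_entropyGap.ge_on_segment (Set.left_mem_Icc.2 hq₀.le)
      (Set.right_mem_Icc.2 hq₀.le) (by rwa [segment_eq_Icc hq₀.le])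
    rw [entropyGap_zero] at h
    exact le_trans (le_min le_rfl (middle q ⟨le_rfl, by linarith⟩)) h
  rcases le_total p q with h | h
  · exact left p ⟨hp₀, h⟩
  rcases le_total p (1 - q) with h' | h'
  · exact middle p ⟨h, h'⟩
  · rw [← entropyGap_one_sub]
    exact left (1 - p) ⟨by linarith, by linarith⟩

lemma binEnt_eq_binEntropy_div (p : ℝ) : binEnt p = binEntropy p / log 2 := by
  rw [binEnt, binEntropy, Real.logb, Real.logb, Real.log_inv, Real.log_inv]
  ring

lemma binEnt_le_Bh {p : ℝ} (hp₀ : 0 ≤ p) (hp₁ : p ≤ 1) : binEnt p ≤ Bh p := by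
  have h := entropyGap_nonneg hp₀ hp₁
  rw [entropyGap] at h
  rw [binEnt_eq_binEntropy_div, div_le_iff₀ (Real.log_pos one_lt_two)]
  linarith

lemma mul_logb_two_mul (p : ℝ) : p * logb 2 (2 * p) = p + p * logb 2 p := by
  rcases eq_or_ne p 0 with rfl | hp
  · simp
  · rw [Real.logb_mul two_ne_zero hp, Real.logb_self_eq_one one_lt_two]
    ring

lemma half_mul_logb_add_half_mul_logb {a b : ℝ} (hab : a + b ≠ 0) :
    1 / 2 * a * logb 2 (a / (1 / 2 * a + 1 / 2 * b)) +
      1 / 2 * b * logb 2 (b / (1 / 2 * a + 1 / 2 * b)) =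
      (a + b) / 2 * (1 - binEnt (a / (a + b))) := by
  have ha' : a / (1 / 2 * a + 1 / 2 * b) = 2 * (a / (a + b)) := by field_simp
  have hb' : b / (1 / 2 * a + 1 / 2 * b) = 2 * (1 - a / (a + b)) := by field_simp; ring
  rw [ha', hb', binEnt]
  have ha : a = (a + b) * (a / (a + b)) := by field_simp
  generalize a / (a + b) = p at ha ⊢
  linear_combination (1 / 2 * logb 2 (2 * p) - 1 / 2 * logb 2 (2 * (1 - p))) * ha +
    (a + b) / 2 * (mul_logb_two_mul p + mul_logb_two_mul (1 - p))

lemma sqrt_mul_eq_Bh {a b : ℝ} (ha : 0 ≤ a) (hb : 0 ≤ b) :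
    √(a * b) = (a + b) / 2 * Bh (a / (a + b)) := by
  rcases (add_nonneg ha hb).eq_or_lt with hab | hab
  · obtain rfl : a = 0 := by linarith
    simp [Bh]
  · have : a / (a + b) * (1 - a / (a + b)) = a * b / (a + b) ^ 2 := by field_simp; ring
    rw [Bh, this, Real.sqrt_div' _ (sq_nonneg _), Real.sqrt_sq hab.le]
    field_simp

lemma one_sub_symCap_eq_sum_mul_binEnt (W : Fin 2 → Y → ℝ) (hsum : ∀ x, ∑ y, W x y = 1)
    (hpos : ∀ y, W 0 y + W 1 y ≠ 0) :
    1 - symCap W = ∑ y, (W 0 y + W 1 y) / 2 * binEnt (W 0 y / (W 0 y + W 1 y)) := by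
  have hone : 1 = ∑ y, (W 0 y + W 1 y) / 2 := by
    rw [← Finset.sum_div, Finset.sum_add_distrib, hsum, hsum]
    norm_num
  simp only [symCap, Fin.sum_univ_two, half_mul_logb_add_half_mul_logb (hpos _), mul_one_sub]
  rw [Finset.sum_sub_distrib, ← hone, sub_sub_cancel]

lemma bhat_eq_sum_mul_Bh (W : Fin 2 → Y → ℝ) (hnn : ∀ x y, 0 ≤ W x y) :
    bhat W = ∑ y, (W 0 y + W 1 y) / 2 * Bh (W 0 y / (W 0 y + W 1 y)) := by
  simp only [bhat, sqrt_mul_eq_Bh (hnn 0 _) (hnn 1 _)]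

theorem Z_ge_one_sub_I (W : Fin 2 → Y → ℝ)
    (hnn : ∀ x y, 0 ≤ W x y) (hsum : ∀ x, ∑ y, W x y = 1)
    (hpos : ∀ y, 0 < W 0 y + W 1 y) :
    1 - symCap W ≤ bhat W := by
  rw [one_sub_symCap_eq_sum_mul_binEnt W hsum fun y ↦ (hpos y).ne', bhat_eq_sum_mul_Bh W hnn]
  gcongr with y
  · exact div_nonneg (hpos y).le zero_le_two
  · exact binEnt_le_Bh (div_nonneg (hnn 0 y) (hpos y).le)
      (div_le_one_of_le₀ (le_add_of_nonneg_right (hnn 1 y)) (hpos y).le)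
end
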